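/- Fix real numbers φ and θ with |θ| ≤ π. Then min over α ∈ ℝ of max over s ∈ {+1, −1} of |1 − e^{i(α + φ + s·θ/2)}| equals 2|sin(θ/4)|. -/

import Mathlib

open Real Complex

lemma key_abs (x : ℝ) : ‖1 - Complex.exp (Complex.I * (x:ℂ))‖ = 2 * |Real.sin (x/2)| := by
  rw [mul_comm, Complex.exp_mul_I, Complex.norm_def, Complex.normSq_apply]
  have h1 : ((1:ℂ) - ((Complex.cos x) + (Complex.sin x) * Complex.I)).re = 1 - Real.cos x := by
    simp [Complex.cos_ofReal_re, Complex.sin_ofReal_re]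
  have h2 : ((1:ℂ) - ((Complex.cos x) + (Complex.sin x) * Complex.I)).im = -Real.sin x := by
    simp [Complex.cos_ofReal_im, Complex.sin_ofReal_re]
  rw [h1, h2]
  have hs : Real.sin (x/2)^2 = 1/2 - Real.cos x / 2 := by
    have hc := Real.cos_sq (x/2)
    rw [show (2:ℝ) * (x/2) = x by ring] at hc
    nlinarith [Real.sin_sq_add_cos_sq (x/2)]
  have : (1 - Real.cos x) * (1 - Real.cos x) + (-Real.sin x) * (-Real.sin x)
      = (2 * |Real.sin (x/2)|)^2 := by
    have := Real.sin_sq_add_cos_sq x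
    rw [mul_pow, _root_.sq_abs]
    nlinarith
  rw [this, Real.sqrt_sq (by positivity)]

lemma max_sin_lb (a b : ℝ) (h : Real.cos (a - b) ≥ 0) :
    |Real.sin ((a - b)/2)| ≤ max |Real.sin a| |Real.sin b| := by
  set M := max |Real.sin a| |Real.sin b| with hM
  have hM0 : 0 ≤ M := le_trans (abs_nonneg _) (le_max_left _ _)
  have hsq : Real.sin ((a-b)/2)^2 ≤ M^2 := by
    have ha : Real.sin a ^ 2 ≤ M^2 := by
      have : |Real.sin a| ≤ M := le_max_left _ _
      nlinarith [abs_nonneg (Real.sin a), _root_.sq_abs (Real.sin a)]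
    have hb : Real.sin b ^ 2 ≤ M^2 := by
      have : |Real.sin b| ≤ M := le_max_right _ _
      nlinarith [abs_nonneg (Real.sin b), _root_.sq_abs (Real.sin b)]
    have hsa : Real.sin a ^2 = 1/2 - Real.cos (2*a)/2 := by
      have hc := Real.cos_sq a
      nlinarith [Real.sin_sq_add_cos_sq a]
    have hsb : Real.sin b ^2 = 1/2 - Real.cos (2*b)/2 := by
      have hc := Real.cos_sq b
      nlinarith [Real.sin_sq_add_cos_sq b]
    have hsd : Real.sin ((a-b)/2) ^2 = 1/2 - Real.cos (a-b)/2 := by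
      have hc := Real.cos_sq ((a-b)/2)
      rw [show (2:ℝ) * ((a-b)/2) = a - b by ring] at hc
      nlinarith [Real.sin_sq_add_cos_sq ((a-b)/2)]
    have hadd : Real.cos (2*a) + Real.cos (2*b) = 2 * Real.cos (a+b) * Real.cos (a-b) := by
      have := Real.cos_add_cos (2*a) (2*b)
      rw [show (2*a+2*b)/2 = a + b by ring, show (2*a-2*b)/2 = a - b by ring] at this
      linarith
    nlinarith [Real.neg_one_le_cos (a+b), Real.cos_le_one (a+b)]
  nlinarith [_root_.sq_abs (Real.sin ((a-b)/2)), abs_nonneg (Real.sin ((a-b)/2))]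

/-- The phase-agnostic operator-norm distance:
`min_α max_{s=±1} |1 - e^{i(α + φ + s θ/2)}| = 2|sin(θ/4)|`. -/
theorem phase_agnostic_distance (φ θ : ℝ) (hθ : |θ| ≤ π) :
    IsLeast
      (Set.range fun α : ℝ =>
        max ‖1 - Complex.exp (Complex.I * ((α : ℂ) + φ + θ / 2))‖
            ‖1 - Complex.exp (Complex.I * ((α : ℂ) + φ - θ / 2))‖)
      (2 * |Real.sin (θ / 4)|) := by
  constructor
  · refine ⟨-φ, ?_⟩
    have e1 : ((-φ:ℝ):ℂ) + φ + θ/2 = ((θ/2 : ℝ) : ℂ) := by push_cast; ring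
    have e2 : ((-φ:ℝ):ℂ) + φ - θ/2 = ((-(θ/2) : ℝ) : ℂ) := by push_cast; ring
    simp only [e1, e2, key_abs]
    rw [show (θ/2)/2 = θ/4 by ring, show (-(θ/2))/2 = -(θ/4) by ring, Real.sin_neg,
      abs_neg, max_self]
  · rintro x ⟨α, rfl⟩
    have e1 : Complex.I * ((α:ℂ) + φ + θ/2) = Complex.I * ((α + φ + θ/2 : ℝ):ℂ) := by
      push_cast; ring
    have e2 : Complex.I * ((α:ℂ) + φ - θ/2) = Complex.I * ((α + φ - θ/2 : ℝ):ℂ) := by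
      push_cast; ring
    simp only [e1, e2, key_abs]
    set a := (α + φ + θ/2)/2
    set b := (α + φ - θ/2)/2
    have hab : a - b = θ/2 := by simp [a, b]; ring
    have hcos : Real.cos (a - b) ≥ 0 := by
      rw [hab]
      rcases abs_le.mp hθ with ⟨h1, h2⟩
      exact Real.cos_nonneg_of_mem_Icc ⟨by linarith, by linarith⟩
    have hmax := max_sin_lb a b hcos
    rw [hab, show θ/2/2 = θ/4 by ring] at hmax
    rcases le_max_iff.mp hmax with h | h
    · exact le_max_of_le_left (by linarith)
    · exact le_max_of_le_right (by linarith)
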